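/- Consider a GSWF on three alternatives with n voters satisfying the IIA condition, whose choice functions f, g, h : {0,1}^n → {0,1} are balanced (E[f] = E[g] = E[h] = 1/2). If the individual preferences are independent and uniformly distributed (i.e., distributed according to D(1/6,1/6,1/6)), then the probability of a rational choice is at least 5/8; equivalently, W(f,g,h) ≤ 3/8. -/

import Mathlib

open Finset Real

noncomputable section

namespace GSWF

/-- Walsh function `r_S(x) = ∏_{i∈S} (2 x_i - 1)` on the discrete cube. -/
def walsh {n : ℕ} (S : Finset (Fin n)) (x : Fin n → Bool) : ℝ :=
  ∏ i ∈ S, (if x i then (1 : ℝ) else -1)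

/-- Fourier–Walsh coefficient `f̂(S) = 2^{-n} ∑_x f(x) r_S(x)`. -/
def coeff {n : ℕ} (f : (Fin n → Bool) → ℝ) (S : Finset (Fin n)) : ℝ :=
  (∑ x : Fin n → Bool, f x * walsh S x) / 2 ^ n

/-- Expectation under the uniform measure on the discrete cube. -/
def expect {n : ℕ} (f : (Fin n → Bool) → ℝ) : ℝ :=
  (∑ x : Fin n → Bool, f x) / 2 ^ n

/-- Biased inner product `⟨⟨f,g⟩⟩_δ = ∑_{S ≠ ∅} f̂(S) ĝ(S) δ^{|S|}`. -/
def bip {n : ℕ} (δ : ℝ) (f g : (Fin n → Bool) → ℝ) : ℝ :=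
  ∑ S ∈ Finset.univ.filter (fun S : Finset (Fin n) => S ≠ ∅),
    coeff f S * coeff g S * δ ^ S.card

/-- Probability of a single voter's preference triple under `D(α,β,γ)`. -/
def prTriple (α β γ : ℝ) : Bool → Bool → Bool → ℝ
  | true, true, false => α
  | false, false, true => α
  | false, true, true => β
  | true, false, false => β
  | true, false, true => γ
  | false, true, false => γ
  | _, _, _ => 0

/-- Probability of a profile under the even product distribution `D(α,β,γ)`. -/
def prProfile {n : ℕ} (α β γ : ℝ) (x y z : Fin n → Bool) : ℝ :=
  ∏ i, prTriple α β γ (x i) (y i) (z i)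

/-- Probability of an irrational outcome `W(f,g,h)` under `D(α,β,γ)`. -/
def W {n : ℕ} (α β γ : ℝ) (f g h : (Fin n → Bool) → ℝ) : ℝ :=
  ∑ x : Fin n → Bool, ∑ y : Fin n → Bool, ∑ z : Fin n → Bool,
    prProfile α β γ x y z *
      (f x * g y * h z + (1 - f x) * (1 - g y) * (1 - h z))

/-- A real-valued function on the cube that takes only the values 0 and 1. -/
def IsBooleanFn {n : ℕ} (f : (Fin n → Bool) → ℝ) : Prop :=
  ∀ x, f x = 0 ∨ f x = 1

/-- Monotone increasing function on the discrete cube. -/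
def MonotoneCube {n : ℕ} (f : (Fin n → Bool) → ℝ) : Prop :=
  ∀ x y : Fin n → Bool, (∀ i, x i ≤ y i) → f x ≤ f y

/-- Monotone decreasing function on the discrete cube. -/
def AntitoneCube {n : ℕ} (f : (Fin n → Bool) → ℝ) : Prop :=
  ∀ x y : Fin n → Bool, (∀ i, x i ≤ y i) → f y ≤ f x

/-- Invariance under a transitive group of permutations of the coordinates. -/
def TransitiveSymmetric {n : ℕ} (f : (Fin n → Bool) → ℝ) : Prop :=
  ∃ G : Subgroup (Equiv.Perm (Fin n)),
    (∀ i j : Fin n, ∃ σ ∈ G, σ i = j) ∧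
    ∀ σ ∈ G, ∀ x : Fin n → Bool, f (x ∘ σ) = f x

/-- The majority function: 1 iff more than half of the coordinates are 1. -/
def maj (n : ℕ) (x : Fin n → Bool) : ℝ :=
  if n < 2 * (Finset.univ.filter (fun i => x i = true)).card then 1 else 0

/-- The dual function `f'(x) = 1 - f(1-x)`. -/
def dualFn {n : ℕ} (f : (Fin n → Bool) → ℝ) (x : Fin n → Bool) : ℝ :=
  1 - f (fun i => !(x i))

/-- The Bonamie–Beckner noise operator `T_δ`. -/
def Tnoise {n : ℕ} (δ : ℝ) (f : (Fin n → Bool) → ℝ) (x : Fin n → Bool) : ℝ :=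
  ∑ S : Finset (Fin n), δ ^ S.card * coeff f S * walsh S x

/-- The AND function on the discrete cube. -/
def andFn (n : ℕ) (x : Fin n → Bool) : ℝ :=
  if ∀ i, x i = true then 1 else 0

/-- The OR function on the discrete cube (the dual of AND). -/
def orFn (n : ℕ) (x : Fin n → Bool) : ℝ :=
  if ∃ i, x i = true then 1 else 0

/-! Under `D(α, β, γ)` each two of the three profiles form a pair of correlated uniform points of
the cube: `(x, y)`, `(x, z)`, `(y, z)` have per-coordinate correlation `4α - 1`, `4γ - 1`, `4β - 1`.
Expanding `fgh + (1 - f)(1 - g)(1 - h) = 1 - f - g - h + fg + fh + gh` and the correlated-pair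
kernel in Walsh functions gives Kalai's formula `W = E f E g E h + (1 - E f)(1 - E g)(1 - E h)
+ ⟨⟨f, g⟩⟩_{4α-1} + ⟨⟨f, h⟩⟩_{4γ-1} + ⟨⟨g, h⟩⟩_{4β-1}`.
For balanced functions and uniform preferences the first two terms give `1/4`. Since
`(-1/3)^k ∈ [-1/3, 1/6]` for `k ≥ 1` and `-(a² + b² + c²)/2 ≤ ab + ac + bc ≤ a² + b² + c²`, the
three biased inner products add up to at most a sixth of the Fourier weight
`∑_{S ≠ ∅} (f̂² + ĝ² + ĥ²)`, which is `3/4` by Parseval and `f² = f`; so `W ≤ 1/4 + 1/8`. -/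

def spin (b : Bool) : ℝ := if b then 1 else -1

/-- Law of a pair of `ρ`-correlated uniform points of the cube: the coordinate pairs are
independent, with `E[spin xᵢ * spin yᵢ] = ρ`. -/
def correlatedPr {n : ℕ} (ρ : ℝ) (x y : Fin n → Bool) : ℝ :=
  ∏ i, (1 + ρ * (spin (x i) * spin (y i))) / 4

section Correlated

variable {n : ℕ} (ρ : ℝ)

lemma correlatedPr_comm (x y : Fin n → Bool) : correlatedPr ρ x y = correlatedPr ρ y x := by
  simp only [correlatedPr, mul_comm (spin (x _))]

lemma sum_correlatedPr_right (x : Fin n → Bool) : ∑ y, correlatedPr ρ x y = (1 / 2) ^ n := by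
  have factor (a : Bool) :
      ∑ b, (1 + ρ * (spin a * spin b)) / 4 = 1 / 2 := by
    cases a <;> norm_num [Fintype.sum_bool, spin] <;> ring
  unfold correlatedPr
  rw [← Fintype.prod_sum (fun i b => (1 + ρ * (spin (x i) * spin b)) / 4)]
  simp only [factor, prod_const, card_univ, Fintype.card_fin]

lemma sum_sum_correlatedPr : ∑ x : Fin n → Bool, ∑ y, correlatedPr ρ x y = 1 := by
  simp [sum_correlatedPr_right]

lemma sum_sum_correlatedPr_mul_left (f : (Fin n → Bool) → ℝ) :
    ∑ x, ∑ y, correlatedPr ρ x y * f x = expect f := by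
  simp_rw [← sum_mul, sum_correlatedPr_right, ← mul_sum]
  rw [expect, one_div_pow, one_div_mul_eq_div]

lemma sum_sum_correlatedPr_mul_right (g : (Fin n → Bool) → ℝ) :
    ∑ x, ∑ y, correlatedPr ρ x y * g y = expect g := by
  rw [Finset.sum_comm]
  simp_rw [correlatedPr_comm ρ _ (_ : Fin n → Bool)]
  exact sum_sum_correlatedPr_mul_left ρ g

lemma prod_one_add_mul_spin (x y : Fin n → Bool) :
    ∏ i, (1 + ρ * (spin (x i) * spin (y i))) = ∑ S, ρ ^ S.card * (walsh S x * walsh S y) := by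
  rw [prod_one_add, powerset_univ]
  refine sum_congr rfl fun S _ => ?_
  rw [prod_mul_distrib, prod_const, prod_mul_distrib]
  rfl

lemma correlatedPr_eq_sum_walsh (x y : Fin n → Bool) :
    correlatedPr ρ x y = (∑ S, ρ ^ S.card * (walsh S x * walsh S y)) / 4 ^ n := by
  rw [correlatedPr, prod_div_distrib, prod_one_add_mul_spin]
  simp

lemma coeff_empty (f : (Fin n → Bool) → ℝ) : coeff f ∅ = expect f := by
  simp [coeff, expect, walsh]

lemma sum_coeff_mul_coeff_mul_pow (f g : (Fin n → Bool) → ℝ) :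
    ∑ S, coeff f S * coeff g S * ρ ^ S.card = expect f * expect g + bip ρ f g := by
  rw [bip, filter_ne', ← add_sum_erase (M := ℝ) _ _ (mem_univ ∅), coeff_empty, coeff_empty]
  simp

theorem sum_sum_correlatedPr_mul (f g : (Fin n → Bool) → ℝ) :
    ∑ x, ∑ y, correlatedPr ρ x y * (f x * g y) = expect f * expect g + bip ρ f g := by
  rw [← sum_coeff_mul_coeff_mul_pow]
  calc ∑ x, ∑ y, correlatedPr ρ x y * (f x * g y)
      = ∑ x, ∑ y, ∑ S, ρ ^ S.card / 4 ^ n * ((f x * walsh S x) * (g y * walsh S y)) := by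
        simp_rw [correlatedPr_eq_sum_walsh, sum_div, sum_mul]
        refine sum_congr rfl fun x _ => sum_congr rfl fun y _ => sum_congr rfl fun S _ => ?_
        ring
    _ = ∑ x, ∑ S, ∑ y, ρ ^ S.card / 4 ^ n * ((f x * walsh S x) * (g y * walsh S y)) :=
        sum_congr rfl fun x _ => Finset.sum_comm
    _ = ∑ S, ρ ^ S.card / 4 ^ n * ((∑ x, f x * walsh S x) * (∑ y, g y * walsh S y)) := by
        rw [Finset.sum_comm]
        simp_rw [sum_mul_sum, mul_sum]
    _ = ∑ S, coeff f S * coeff g S * ρ ^ S.card := by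
        refine sum_congr rfl fun S _ => ?_
        rw [coeff, coeff, show (4 : ℝ) ^ n = 2 ^ n * 2 ^ n by rw [← mul_pow]; norm_num]
        field_simp

lemma correlatedPr_one (x y : Fin n → Bool) :
    correlatedPr 1 x y = if x = y then (1 / 2) ^ n else 0 := by
  have factor (a b : Bool) : (1 + 1 * (spin a * spin b)) / 4 = if a = b then 1 / 2 else 0 := by
    cases a <;> cases b <;> norm_num [spin]
  simp only [correlatedPr, factor, Fintype.prod_ite_zero, funext_iff]
  simp

theorem expect_mul_eq_add_bip_one (f g : (Fin n → Bool) → ℝ) :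
    expect (fun x => f x * g x) = expect f * expect g + bip 1 f g := by
  rw [← sum_sum_correlatedPr_mul]
  simp [correlatedPr_one, expect, ite_mul, mul_sum, div_eq_inv_mul]

lemma bip_one_self_of_isBooleanFn {f : (Fin n → Bool) → ℝ} (hf : IsBooleanFn f) :
    bip 1 f f = expect f * (1 - expect f) := by
  have hff : (fun x => f x * f x) = f := funext fun x => by rcases hf x with h | h <;> simp [h]
  have := expect_mul_eq_add_bip_one f f
  rw [hff] at this
  linarith

end Correlated

lemma pairwise_mul_sum_mul_le_of_mem_Icc {a b c t : ℝ} (ht : t ∈ Set.Icc (-1 / 3 : ℝ) (1 / 6)) :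
    (a * b + a * c + b * c) * t ≤ (a ^ 2 + b ^ 2 + c ^ 2) / 6 := by
  obtain ⟨ht₁, ht₂⟩ := ht
  rcases le_total 0 t with h | h
  · nlinarith [sq_nonneg (a - b), sq_nonneg (a - c), sq_nonneg (b - c)]
  · nlinarith [sq_nonneg (a + b + c)]

lemma neg_one_third_pow_mem_Icc {k : ℕ} (hk : k ≠ 0) :
    (-1 / 3 : ℝ) ^ k ∈ Set.Icc (-1 / 3 : ℝ) (1 / 6) := by
  obtain _ | _ | k := k
  · contradiction
  · norm_num
  · have hle : |(-1 / 3 : ℝ) ^ k| ≤ 1 := by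
      rw [abs_pow]; exact pow_le_one₀ (abs_nonneg _) (by norm_num [abs_div])
    have h9 : (-1 / 3 : ℝ) ^ (k + 2) = (-1 / 3) ^ k / 9 := by ring
    rw [h9]
    constructor <;> linarith [abs_le.mp hle]

theorem bip_neg_one_third_le {n : ℕ} (f g h : (Fin n → Bool) → ℝ) :
    bip (-1 / 3) f g + bip (-1 / 3) f h + bip (-1 / 3) g h
      ≤ (bip 1 f f + bip 1 g g + bip 1 h h) / 6 := by
  simp only [bip, one_pow, mul_one, ← sum_add_distrib, sum_div]
  refine sum_le_sum fun S hS => ?_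
  have hS : S.card ≠ 0 := card_ne_zero.mpr (nonempty_iff_ne_empty.mpr (mem_filter.mp hS).2)
  have := pairwise_mul_sum_mul_le_of_mem_Icc (a := coeff f S) (b := coeff g S) (c := coeff h S)
    (neg_one_third_pow_mem_Icc hS)
  linarith

section Profile

variable {n : ℕ} {α β γ : ℝ}

lemma sum_prTriple_right (hαβγ : α + β + γ = 1 / 2) (a b : Bool) :
    ∑ c, prTriple α β γ a b c = (1 + (4 * α - 1) * (spin a * spin b)) / 4 := by
  cases a <;> cases b <;> simp [prTriple, spin] <;> linarith

lemma sum_prTriple_middle (hαβγ : α + β + γ = 1 / 2) (a c : Bool) :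
    ∑ b, prTriple α β γ a b c = (1 + (4 * γ - 1) * (spin a * spin c)) / 4 := by
  cases a <;> cases c <;> simp [prTriple, spin] <;> linarith

lemma sum_prTriple_left (hαβγ : α + β + γ = 1 / 2) (b c : Bool) :
    ∑ a, prTriple α β γ a b c = (1 + (4 * β - 1) * (spin b * spin c)) / 4 := by
  cases b <;> cases c <;> simp [prTriple, spin] <;> linarith

lemma sum_prProfile_right (hαβγ : α + β + γ = 1 / 2) (x y : Fin n → Bool) :
    ∑ z, prProfile α β γ x y z = correlatedPr (4 * α - 1) x y := by
  unfold prProfile correlatedPr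
  rw [← Fintype.prod_sum (fun i c => prTriple α β γ (x i) (y i) c)]
  exact prod_congr rfl fun i _ => sum_prTriple_right hαβγ _ _

lemma sum_prProfile_middle (hαβγ : α + β + γ = 1 / 2) (x z : Fin n → Bool) :
    ∑ y, prProfile α β γ x y z = correlatedPr (4 * γ - 1) x z := by
  unfold prProfile correlatedPr
  rw [← Fintype.prod_sum (fun i b => prTriple α β γ (x i) b (z i))]
  exact prod_congr rfl fun i _ => sum_prTriple_middle hαβγ _ _

lemma sum_prProfile_left (hαβγ : α + β + γ = 1 / 2) (y z : Fin n → Bool) :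
    ∑ x, prProfile α β γ x y z = correlatedPr (4 * β - 1) y z := by
  unfold prProfile correlatedPr
  rw [← Fintype.prod_sum (fun i a => prTriple α β γ a (y i) (z i))]
  exact prod_congr rfl fun i _ => sum_prTriple_left hαβγ _ _

lemma sum_prProfile_mul_of_xy (hαβγ : α + β + γ = 1 / 2)
    (F : (Fin n → Bool) → (Fin n → Bool) → ℝ) :
    ∑ x, ∑ y, ∑ z, prProfile α β γ x y z * F x y
      = ∑ x, ∑ y, correlatedPr (4 * α - 1) x y * F x y := by
  simp_rw [← sum_mul, sum_prProfile_right hαβγ]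

lemma sum_prProfile_mul_of_xz (hαβγ : α + β + γ = 1 / 2)
    (F : (Fin n → Bool) → (Fin n → Bool) → ℝ) :
    ∑ x, ∑ y, ∑ z, prProfile α β γ x y z * F x z
      = ∑ x, ∑ z, correlatedPr (4 * γ - 1) x z * F x z := by
  refine sum_congr rfl fun x _ => ?_
  rw [Finset.sum_comm]
  simp_rw [← sum_mul, sum_prProfile_middle hαβγ]

lemma sum_prProfile_mul_of_yz (hαβγ : α + β + γ = 1 / 2)
    (F : (Fin n → Bool) → (Fin n → Bool) → ℝ) :
    ∑ x, ∑ y, ∑ z, prProfile α β γ x y z * F y z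
      = ∑ y, ∑ z, correlatedPr (4 * β - 1) y z * F y z := by
  rw [Finset.sum_comm]
  refine sum_congr rfl fun y _ => ?_
  rw [Finset.sum_comm]
  simp_rw [← sum_mul, sum_prProfile_left hαβγ]

lemma sum_prProfile (hαβγ : α + β + γ = 1 / 2) :
    ∑ x : Fin n → Bool, ∑ y, ∑ z, prProfile α β γ x y z = 1 := by
  simp_rw [sum_prProfile_right hαβγ, sum_sum_correlatedPr]

theorem W_eq_expect_add_bip (hαβγ : α + β + γ = 1 / 2) (f g h : (Fin n → Bool) → ℝ) :
    W α β γ f g h =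
      expect f * expect g * expect h + (1 - expect f) * (1 - expect g) * (1 - expect h)
        + bip (4 * α - 1) f g + bip (4 * γ - 1) f h + bip (4 * β - 1) g h := by
  have expand : ∀ x y z,
      prProfile α β γ x y z * (f x * g y * h z + (1 - f x) * (1 - g y) * (1 - h z))
        = prProfile α β γ x y z - prProfile α β γ x y z * f x - prProfile α β γ x y z * g y
          - prProfile α β γ x y z * h z + prProfile α β γ x y z * (f x * g y)
          + prProfile α β γ x y z * (f x * h z) + prProfile α β γ x y z * (g y * h z) := by
    intros; ring
  simp only [W, expand, sum_add_distrib, sum_sub_distrib]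
  rw [sum_prProfile hαβγ, sum_prProfile_mul_of_xy hαβγ (fun x _ => f x),
    sum_prProfile_mul_of_xy hαβγ (fun _ y => g y), sum_prProfile_mul_of_xz hαβγ (fun _ z => h z),
    sum_prProfile_mul_of_xy hαβγ (fun x y => f x * g y),
    sum_prProfile_mul_of_xz hαβγ (fun x z => f x * h z),
    sum_prProfile_mul_of_yz hαβγ (fun y z => g y * h z),
    sum_sum_correlatedPr_mul_left, sum_sum_correlatedPr_mul_right, sum_sum_correlatedPr_mul_right,
    sum_sum_correlatedPr_mul, sum_sum_correlatedPr_mul, sum_sum_correlatedPr_mul]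
  ring

end Profile

theorem balanced_rationality_lower_bound_general {n : ℕ}
    (f g h : (Fin n → Bool) → ℝ)
    (hf : IsBooleanFn f) (hg : IsBooleanFn g) (hh : IsBooleanFn h)
    (hfb : expect f = 1 / 2) (hgb : expect g = 1 / 2)
    (hhb : expect h = 1 / 2) :
    W (1 / 6) (1 / 6) (1 / 6) f g h ≤ 3 / 8 := by
  have hρ : (4 * (1 / 6) - 1 : ℝ) = -1 / 3 := by norm_num
  have hvar := bip_neg_one_third_le f g h
  rw [bip_one_self_of_isBooleanFn hf, bip_one_self_of_isBooleanFn hg,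
    bip_one_self_of_isBooleanFn hh, hfb, hgb, hhb] at hvar
  rw [W_eq_expect_add_bip (by norm_num), hρ, hfb, hgb, hhb]
  linarith

/-- for balanced choice functions and uniform preferences,
the probability of a rational choice is at least 5/8, i.e.
`W(f,g,h) ≤ 3/8`. -/
theorem balanced_rationality_lower_bound {n : ℕ} (hn : 1 ≤ n)
    (f g h : (Fin n → Bool) → ℝ)
    (hf : IsBooleanFn f) (hg : IsBooleanFn g) (hh : IsBooleanFn h)
    (hfb : expect f = 1 / 2) (hgb : expect g = 1 / 2)
    (hhb : expect h = 1 / 2) :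
    W (1 / 6) (1 / 6) (1 / 6) f g h ≤ 3 / 8 :=
  balanced_rationality_lower_bound_general f g h hf hg hh hfb hgb hhb

end GSWF
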